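/- Let x, y ∈ L^{-1,n} with xᵢ = yᵢ for all i ≤ n and x_{n+1} = −y_{n+1} ≠ 0. Let z = x ⊕_P y and z' = y ⊕_P x be the two directions of the parallel transport residual addition. Then z_{n+1} = −z'_{n+1}. -/
import Mathlib


open Finset

/-- Lorentzian inner product on ℝ^{n+1}: ⟨u,v⟩_L = -u₀v₀ + Σᵢ uᵢvᵢ. -/
noncomputable def lip {n : ℕ} (u v : Fin (n+1) → ℝ) : ℝ :=
  -(u 0 * v 0) + ∑ i : Fin n, u i.succ * v i.succ

/-- Lorentzian norm of a space-like vector: ‖v‖_L = √⟨v,v⟩_L. -/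
noncomputable def lnormS {n : ℕ} (v : Fin (n+1) → ℝ) : ℝ := Real.sqrt (lip v v)

/-- Membership in the Lorentz hyperboloid L^{-1,n}. -/
def onH {n : ℕ} (x : Fin (n+1) → ℝ) : Prop := lip x x = -1 ∧ 0 < x 0

/-- The origin of the hyperboloid. -/
noncomputable def orig {n : ℕ} : Fin (n+1) → ℝ := fun i => if i = 0 then 1 else 0

/-- Inverse hyperbolic cosine. -/
noncomputable def acosh (x : ℝ) : ℝ := Real.log (x + Real.sqrt (x ^ 2 - 1))

/-- Logarithmic map at the origin. -/
noncomputable def logo {n : ℕ} (y : Fin (n+1) → ℝ) : Fin (n+1) → ℝ :=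
  (acosh (y 0) / Real.sqrt ((y 0) ^ 2 - 1)) • (y - (y 0) • orig)

/-- Parallel transport from the origin to x. -/
noncomputable def ptrans {n : ℕ} (x u : Fin (n+1) → ℝ) : Fin (n+1) → ℝ :=
  u + (lip x u / (1 - lip orig x)) • (orig + x)

/-- Exponential map at x. -/
noncomputable def expmap {n : ℕ} (x v : Fin (n+1) → ℝ) : Fin (n+1) → ℝ :=
  Real.cosh (lnormS v) • x + (Real.sinh (lnormS v) / lnormS v) • v

/-- Parallel-transport residual addition x ⊕_P y = exp_x(P_{o→x}(log_o y)). -/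
noncomputable def padd {n : ℕ} (x y : Fin (n+1) → ℝ) : Fin (n+1) → ℝ :=
  expmap x (ptrans x (logo y))

/-- Reflection negating the last coordinate. -/
noncomputable def lrefl {n : ℕ} (v : Fin (n+1) → ℝ) : Fin (n+1) → ℝ :=
  fun i => if i = Fin.last n then -v i else v i

lemma refl_add {n : ℕ} (u v : Fin (n+1) → ℝ) : lrefl (u + v) = lrefl u + lrefl v := by
  funext i; simp only [lrefl, Pi.add_apply]; split_ifs <;> ring

lemma refl_sub {n : ℕ} (u v : Fin (n+1) → ℝ) : lrefl (u - v) = lrefl u - lrefl v := by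
  funext i; simp only [lrefl, Pi.sub_apply]; split_ifs <;> ring

lemma refl_smul {n : ℕ} (c : ℝ) (u : Fin (n+1) → ℝ) : lrefl (c • u) = c • lrefl u := by
  funext i; simp only [lrefl, Pi.smul_apply, smul_eq_mul]; split_ifs <;> ring

lemma refl_zero_ne {n : ℕ} (hn : 0 < n) : (0 : Fin (n+1)) ≠ Fin.last n := by
  intro h
  have := Fin.val_eq_of_eq h
  simp [Fin.last] at this
  omega

lemma refl_apply0 {n : ℕ} (hn : 0 < n) (v : Fin (n+1) → ℝ) : lrefl v 0 = v 0 := by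
  simp [lrefl, refl_zero_ne hn]

lemma refl_orig {n : ℕ} (hn : 0 < n) : lrefl (orig : Fin (n+1) → ℝ) = orig := by
  funext i
  simp only [lrefl, orig]
  split_ifs with h h2
  · exact absurd (h2.symm.trans h) (refl_zero_ne hn)
  · ring
  · rfl
  · rfl

lemma lip_refl {n : ℕ} (hn : 0 < n) (u v : Fin (n+1) → ℝ) :
    lip (lrefl u) (lrefl v) = lip u v := by
  unfold lip
  rw [refl_apply0 hn, refl_apply0 hn]
  congr 1
  apply Finset.sum_congr rfl
  intro i _
  simp only [lrefl]
  split_ifs <;> ring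

lemma lnormS_refl {n : ℕ} (hn : 0 < n) (v : Fin (n+1) → ℝ) :
    lnormS (lrefl v) = lnormS v := by
  unfold lnormS; rw [lip_refl hn]

lemma logo_refl {n : ℕ} (hn : 0 < n) (y : Fin (n+1) → ℝ) :
    logo (lrefl y) = lrefl (logo y) := by
  unfold logo
  rw [refl_apply0 hn, refl_smul, refl_sub, refl_smul, refl_orig hn]

lemma ptrans_refl {n : ℕ} (hn : 0 < n) (x u : Fin (n+1) → ℝ) :
    ptrans (lrefl x) (lrefl u) = lrefl (ptrans x u) := by
  unfold ptrans
  rw [lip_refl hn, refl_add, refl_smul, refl_add, refl_orig hn]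
  have : lip (orig : Fin (n+1) → ℝ) (lrefl x) = lip orig x := by
    nth_rewrite 1 [← refl_orig hn]
    rw [lip_refl hn]
  rw [this]

lemma expmap_refl {n : ℕ} (hn : 0 < n) (x v : Fin (n+1) → ℝ) :
    expmap (lrefl x) (lrefl v) = lrefl (expmap x v) := by
  unfold expmap
  rw [lnormS_refl hn, refl_add, refl_smul, refl_smul]

lemma padd_refl {n : ℕ} (hn : 0 < n) (x y : Fin (n+1) → ℝ) :
    padd (lrefl x) (lrefl y) = lrefl (padd x y) := by
  unfold padd
  rw [logo_refl hn, ptrans_refl hn, expmap_refl hn]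

theorem parallel_transport_reflection {n : ℕ} (x y : Fin (n+1) → ℝ)
    (hx : onH x) (hy : onH y)
    (hagree : ∀ i : Fin (n+1), i ≠ Fin.last n → x i = y i)
    (hlast : x (Fin.last n) = -(y (Fin.last n))) (hlast0 : y (Fin.last n) ≠ 0)
    (hxo : x ≠ orig) (hyo : y ≠ orig) :
    padd x y (Fin.last n) = -(padd y x (Fin.last n)) := by
  rcases Nat.eq_zero_or_pos n with hn | hn
  · subst hn
    exfalso
    have h1 := hx.2
    have h2 := hy.2
    have h0 : (Fin.last 0 : Fin 1) = 0 := rfl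
    rw [h0] at hlast
    linarith
  · have hrx : lrefl x = y := by
      funext i
      by_cases h : i = Fin.last n
      · subst h
        simp only [lrefl, if_pos rfl, if_true]
        linarith [hlast]
      · simp only [lrefl, if_neg h]
        exact hagree i h
    have hry : lrefl y = x := by
      funext i
      by_cases h : i = Fin.last n
      · subst h
        simp only [lrefl, if_pos rfl, if_true]
        linarith [hlast]
      · simp only [lrefl, if_neg h]
        exact (hagree i h).symm
    have key : padd y x = lrefl (padd x y) := by
      calc padd y x = padd (lrefl x) (lrefl y) := by rw [hrx, hry]
        _ = lrefl (padd x y) := padd_refl hn x y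
    have := congrFun key (Fin.last n)
    simp only [lrefl, if_pos rfl, if_true] at this
    linarith
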